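/- Let S = {s_1, ..., s_K} ⊂ ℝ be a finite context space with probability weights d(s_i) > 0, and let α_i = d(s_i)(r(s_i,1) − r(s_i,0)) for a bounded reward function r. Consider policies π_θ(s,1) = e^{θ_0+θ_1 s}/(1+e^{θ_0+θ_1 s}) with θ = (θ_0,θ_1) ∈ ℝ^2 and average reward V(θ) = Σ_i d(s_i)[r(s_i,1)π_θ(s_i,1) + r(s_i,0)(1−π_θ(s_i,1))]. Then sup_θ V(θ) equals the maximum of the linear functional (p_1,...,p_K) ↦ Σ_i α_i p_i + Σ_i d(s_i) r(s_i,0) over the set of 0-1 vectors (ν_1,...,ν_K) ∈ {0,1}^K whose entries are monotone (nondecreasing or nonincreasing). In particular, there is a sequence of policies converging to a deterministic policy achieving the supremum. -/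

import Mathlib

open Finset

noncomputable def logistic (x : ℝ) : ℝ := Real.exp x / (1 + Real.exp x)

/-!
`V θ` is an affine function of the vector `p i = logistic (θ.1 + θ.2 * s i)`, which takes
values in `[0, 1]` and is monotone or antitone in `i` according to the sign of `θ.2`. By the
layer-cake formula `p i = ∫₀¹ [t ≤ p i] dt`, such a `p` is an average of its threshold vectors
`i ↦ [t ≤ p i]`, which are monotone (or antitone) 0-1 vectors; hence `V` never exceeds the
maximum over `M`. Conversely, every monotone or antitone 0-1 vector is cut out by the sign of an
affine function `θ.1 + θ.2 * s i` (as `s` is strictly increasing), and scaling this `θ` by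
`n → ∞` drives the policy to that deterministic vector.
-/

open Filter Topology Set MeasureTheory

lemma logistic_eq_sigmoid : logistic = Real.sigmoid := by
  ext x
  rw [logistic, Real.sigmoid_def, Real.exp_neg, div_eq_iff (by positivity)]
  field_simp
  ring

lemma tendsto_logistic_natCast_mul_of_pos {y : ℝ} (hy : 0 < y) :
    Tendsto (fun n : ℕ => logistic (n * y)) atTop (𝓝 1) :=
  logistic_eq_sigmoid ▸
    Real.tendsto_sigmoid_atTop.comp (tendsto_natCast_atTop_atTop.atTop_mul_const hy)

lemma tendsto_logistic_natCast_mul_of_neg {y : ℝ} (hy : y < 0) :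
    Tendsto (fun n : ℕ => logistic (n * y)) atTop (𝓝 0) :=
  logistic_eq_sigmoid ▸
    Real.tendsto_sigmoid_atBot.comp (tendsto_natCast_atTop_atTop.atTop_mul_const_of_neg hy)

lemma monotone_ite_le (t : ℝ) : Monotone fun x : ℝ => if t ≤ x then (1 : ℝ) else 0 := by
  intro x y hxy
  by_cases hx : t ≤ x
  · simp [hx, hx.trans hxy]
  · by_cases hy : t ≤ y <;> simp [hx, hy]

lemma antitone_indicator_Iic (a : ℝ) :
    Antitone ({t : ℝ | t ≤ a}.indicator (1 : ℝ → ℝ)) := by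
  intro x y hxy
  by_cases hy : y ≤ a
  · simp [hy, hxy.trans hy]
  · simp [hy, indicator_nonneg]

lemma intervalIntegral_indicator_Iic {a : ℝ} (ha : a ∈ Icc (0 : ℝ) 1) :
    ∫ t in (0 : ℝ)..1, {t | t ≤ a}.indicator 1 t = a := by
  simp [intervalIntegral.integral_indicator ha]

theorem sum_mul_le_of_forall_threshold_le {ι : Type*} [Fintype ι] (α p : ι → ℝ)
    (hp : ∀ i, p i ∈ Icc (0 : ℝ) 1) (B : ℝ)
    (hB : ∀ t ∈ Icc (0 : ℝ) 1, ∑ i, α i * (if t ≤ p i then 1 else 0) ≤ B) :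
    ∑ i, α i * p i ≤ B := by
  have hint i :
      IntervalIntegrable (fun t => α i * {t | t ≤ p i}.indicator 1 t) volume 0 1 :=
    (antitone_indicator_Iic (p i)).intervalIntegrable.const_mul (α i)
  calc ∑ i, α i * p i
      = ∫ t in (0 : ℝ)..1, ∑ i, α i * {t | t ≤ p i}.indicator 1 t := by
        rw [intervalIntegral.integral_finsetSum fun i _ => hint i]
        simp_rw [intervalIntegral.integral_const_mul, intervalIntegral_indicator_Iic (hp _)]
    _ ≤ ∫ _ in (0 : ℝ)..1, B :=
        intervalIntegral.integral_mono_on zero_le_one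
          (by simpa only [Finset.sum_fn] using
            IntervalIntegrable.sum Finset.univ fun i _ => hint i)
          intervalIntegrable_const hB
    _ = B := by simp

theorem sum_mul_logistic_le {ι : Type*} [Fintype ι] [Preorder ι] {s : ι → ℝ}
    (hs : Monotone s) (α : ι → ℝ) (B : ℝ)
    (hB : ∀ ν : ι → ℝ, (∀ i, ν i = 0 ∨ ν i = 1) → (Monotone ν ∨ Antitone ν) →
      ∑ i, α i * ν i ≤ B)
    (θ : ℝ × ℝ) :
    ∑ i, α i * logistic (θ.1 + θ.2 * s i) ≤ B := by
  rw [logistic_eq_sigmoid]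
  set p : ι → ℝ := fun i => Real.sigmoid (θ.1 + θ.2 * s i)
  have hp : Monotone p ∨ Antitone p := by
    rcases le_total 0 θ.2 with hθ | hθ
    · exact .inl (Real.sigmoid_monotone.comp ((hs.const_mul hθ).const_add θ.1))
    · exact .inr (Real.sigmoid_monotone.comp_antitone
        ((hs.const_mul_of_nonpos hθ).const_add θ.1))
  refine sum_mul_le_of_forall_threshold_le α p (fun i => ?_) B fun t _ => hB _ ?_ ?_
  · exact ⟨Real.sigmoid_nonneg _, Real.sigmoid_le_one _⟩
  · intro i
    by_cases h : t ≤ p i <;> simp [h]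
  · exact hp.imp (monotone_ite_le t).comp (monotone_ite_le t).comp_antitone

lemma exists_between_levels {ι : Type*} [Finite ι] {x ν : ι → ℝ}
    (h : ∀ i j, ν i = 0 → ν j = 1 → x i < x j) :
    ∃ c, ∀ i, (ν i = 0 → x i < c) ∧ (ν i = 1 → c < x i) := by
  obtain ⟨c, hlo, hhi⟩ := Set.Finite.exists_between' (Set.toFinite (x '' {i | ν i = 0}))
    (Set.toFinite (x '' {i | ν i = 1}))
    (by rintro _ ⟨i, hi, rfl⟩ _ ⟨j, hj, rfl⟩; exact h i j hi hj)
  exact ⟨c, fun i => ⟨fun hi => hlo _ ⟨i, hi, rfl⟩, fun hi => hhi _ ⟨i, hi, rfl⟩⟩⟩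

lemma exists_affine_separator {ι : Type*} [Finite ι] [LinearOrder ι] {s ν : ι → ℝ}
    (hs : StrictMono s) (hν : Monotone ν ∨ Antitone ν) :
    ∃ θ : ℝ × ℝ, ∀ i, (ν i = 0 → θ.1 + θ.2 * s i < 0) ∧ (ν i = 1 → 0 < θ.1 + θ.2 * s i) := by
  obtain ⟨b, hb⟩ : ∃ b : ℝ, ∀ i j, ν i = 0 → ν j = 1 → b * s i < b * s j := by
    rcases hν with hν | hν
    · refine ⟨1, fun i j hi hj => ?_⟩
      simp only [one_mul]
      by_contra! hji
      have := hν (hs.le_iff_le.1 hji)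
      linarith
    · refine ⟨-1, fun i j hi hj => ?_⟩
      simp only [neg_one_mul, neg_lt_neg_iff]
      by_contra! hij
      have := hν (hs.le_iff_le.1 hij)
      linarith
  obtain ⟨c, hc⟩ := exists_between_levels hb
  exact ⟨(-c, b), fun i =>
    ⟨fun h => by linarith [(hc i).1 h], fun h => by linarith [(hc i).2 h]⟩⟩

theorem exists_tendsto_logistic {ι : Type*} [Finite ι] [LinearOrder ι] {s ν : ι → ℝ}
    (hs : StrictMono s) (h01 : ∀ i, ν i = 0 ∨ ν i = 1) (hν : Monotone ν ∨ Antitone ν) :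
    ∃ θ : ℕ → ℝ × ℝ, ∀ i,
      Tendsto (fun n => logistic ((θ n).1 + (θ n).2 * s i)) atTop (𝓝 (ν i)) := by
  obtain ⟨θ, hθ⟩ := exists_affine_separator hs hν
  refine ⟨fun n => (n : ℝ) • θ, fun i => ?_⟩
  have hscale (n : ℕ) :
      ((n : ℝ) • θ).1 + ((n : ℝ) • θ).2 * s i = n * (θ.1 + θ.2 * s i) := by
    simp only [Prod.smul_fst, Prod.smul_snd, smul_eq_mul]
    ring
  simp_rw [hscale]
  rcases h01 i with h | h <;> rw [h]
  · exact tendsto_logistic_natCast_mul_of_neg ((hθ i).1 h)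
  · exact tendsto_logistic_natCast_mul_of_pos ((hθ i).2 h)

theorem sup_average_reward_eq_max_over_monotone_01_general
    {K : ℕ} (s : Fin K → ℝ) (hs : StrictMono s)
    (d : Fin K → ℝ)
    (r1 r0 : Fin K → ℝ)
    (α : Fin K → ℝ) (hα : ∀ i, α i = d i * (r1 i - r0 i))
    (V : ℝ × ℝ → ℝ)
    (hV : ∀ θ : ℝ × ℝ, V θ = ∑ i, d i * (r1 i * logistic (θ.1 + θ.2 * s i) +
      r0 i * (1 - logistic (θ.1 + θ.2 * s i))))
    (M : Set (Fin K → ℝ))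
    (hM : M = {ν | (∀ i, ν i = 0 ∨ ν i = 1) ∧ (Monotone ν ∨ Antitone ν)}) :
    sSup (Set.range V) =
      sSup ((fun ν : Fin K → ℝ => (∑ i, α i * ν i) + ∑ i, d i * r0 i) '' M) ∧
    ∃ ν ∈ M, (∑ i, α i * ν i) + (∑ i, d i * r0 i) = sSup (Set.range V) := by
  set f := fun ν : Fin K → ℝ => (∑ i, α i * ν i) + ∑ i, d i * r0 i
  have hVf θ : V θ = f fun i => logistic (θ.1 + θ.2 * s i) := by
    simp only [hV, f, hα, ← Finset.sum_add_distrib]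
    exact Finset.sum_congr rfl fun i _ => by ring
  have hMfin : M.Finite := (Set.Finite.pi fun _ => (Set.finite_singleton 1).insert 0).subset
    fun ν hν i _ => by rw [hM] at hν; exact hν.1 i
  have hMne : M.Nonempty := ⟨0, hM ▸ ⟨fun _ => .inl rfl, .inl monotone_const⟩⟩
  obtain ⟨ν, hνM, hνmax⟩ := Set.exists_max_image M f hMfin hMne
  have hlub : IsLUB (range V) (f ν) := by
    refine ⟨forall_mem_range.2 fun θ => ?_, fun b hb => ?_⟩
    · have hbound := sum_mul_logistic_le hs.monotone α (f ν - ∑ i, d i * r0 i)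
        (fun μ h01 hμ => le_sub_iff_add_le.2 (hνmax μ (hM ▸ ⟨h01, hμ⟩))) θ
      rw [hVf]
      linarith
    · rw [hM] at hνM
      obtain ⟨θ, hθ⟩ := exists_tendsto_logistic hs hνM.1 hνM.2
      have hlim : Tendsto (fun n => V (θ n)) atTop (𝓝 (f ν)) := by
        simp_rw [hVf, f]
        exact (tendsto_finsetSum _ fun i _ => (hθ i).const_mul (α i)).add_const _
      exact le_of_tendsto' hlim fun n => hb (mem_range_self (θ n))
  rw [hlub.csSup_eq (range_nonempty V),
    IsGreatest.csSup_eq ⟨mem_image_of_mem f hνM, forall_mem_image.2 hνmax⟩]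
  exact ⟨rfl, ν, hνM, rfl⟩

/-- Maximizing the average reward of a two-parameter logistic policy class over a
finite context space equals maximizing the corresponding linear functional over
monotone 0-1 vectors; in particular the supremum is attained in the limit by a
deterministic policy. -/
theorem sup_average_reward_eq_max_over_monotone_01
    {K : ℕ} (hK : 0 < K) (s : Fin K → ℝ) (hs : StrictMono s) (hspos : ∀ i, 0 < s i)
    (d : Fin K → ℝ) (hd : ∀ i, 0 < d i) (hdsum : ∑ i, d i = 1)
    (r1 r0 : Fin K → ℝ)
    (α : Fin K → ℝ) (hα : ∀ i, α i = d i * (r1 i - r0 i))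
    (V : ℝ × ℝ → ℝ)
    (hV : ∀ θ : ℝ × ℝ, V θ = ∑ i, d i * (r1 i * logistic (θ.1 + θ.2 * s i) +
      r0 i * (1 - logistic (θ.1 + θ.2 * s i))))
    (M : Set (Fin K → ℝ))
    (hM : M = {ν | (∀ i, ν i = 0 ∨ ν i = 1) ∧ (Monotone ν ∨ Antitone ν)}) :
    sSup (Set.range V) =
      sSup ((fun ν : Fin K → ℝ => (∑ i, α i * ν i) + ∑ i, d i * r0 i) '' M) ∧
    ∃ ν ∈ M, (∑ i, α i * ν i) + (∑ i, d i * r0 i) = sSup (Set.range V) :=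
  sup_average_reward_eq_max_over_monotone_01_general s hs d r1 r0 α hα V hV M hM
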